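/- Suppose 2^n = ∑_{i=1}^m d_i · 10^{e_i} with 1 ≤ d_i ≤ 9 and 0 ≤ e_1 < e_2 < ... < e_m, where n is a positive integer. Then for every k with 2 ≤ k ≤ m, e_k ≤ ⌊(log₂ 10)(e_{k-1} + 1)⌋. -/

import Mathlib

/-!
Split the expansion as `2 ^ n = L + H`, where `H` collects the terms `d i * 10 ^ e i` with
`i ≥ k`. Both `2 ^ n` (as `10 ^ e k ≤ 2 ^ n` forces `e k ≤ n`) and `H` are divisible by
`2 ^ e k`, hence so is the positive number `L`, and therefore
`2 ^ e k ≤ L < 10 ^ (e (k - 1) + 1)`. Taking `log₂` gives the claim.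
-/

open Finset

theorem Nat.sum_mul_pow_lt_pow_succ {ι : Type*} {b M : ℕ} (hb : 0 < b)
    {s : Finset ι} {d e : ι → ℕ} (he : Set.InjOn e s) (hd : ∀ i ∈ s, d i < b)
    (hM : ∀ i ∈ s, e i ≤ M) :
    ∑ i ∈ s, d i * b ^ e i < b ^ (M + 1) := by
  classical
  obtain ⟨c, rfl⟩ : ∃ c, b = c + 1 := ⟨b - 1, by omega⟩
  have hrange : s.image e ⊆ range (M + 1) := by
    simpa [subset_iff, Nat.lt_succ_iff] using hM
  calc ∑ i ∈ s, d i * (c + 1) ^ e i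
      ≤ ∑ i ∈ s, c * (c + 1) ^ e i :=
        sum_le_sum fun i hi => Nat.mul_le_mul_right _ (Nat.le_of_lt_succ (hd i hi))
    _ = c * ∑ j ∈ s.image e, (c + 1) ^ j := by rw [sum_image he, mul_sum]
    _ ≤ c * ∑ j ∈ range (M + 1), (c + 1) ^ j := by gcongr
    _ < (c + 1) ^ (M + 1) := by rw [← geom_sum_mul_add c (M + 1), mul_comm]; omega

theorem pow_dvd_sum_mul_pow {ι : Type*} {b a : ℕ} {s : Finset ι} {d e : ι → ℕ}
    (h : ∀ i ∈ s, a ≤ e i) : b ^ a ∣ ∑ i ∈ s, d i * b ^ e i :=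
  dvd_sum fun i hi => (pow_dvd_pow b (h i hi)).mul_left _

theorem Int.le_floor_logb_mul_of_pow_lt {p q : ℝ} {a b : ℕ} (hp : 1 < p) (hq : 0 < q)
    (h : p ^ a < q ^ b) : (a : ℤ) ≤ ⌊Real.logb p q * b⌋ := by
  rw [Int.le_floor, Int.cast_natCast, mul_comm, ← Real.logb_pow]
  exact ((Real.lt_logb_iff_rpow_lt hp (by positivity)).mpr (by exact_mod_cast h)).le

theorem two_pow_lt_ten_pow_succ_of_eq_sum_digits {n m j : ℕ} {d e : ℕ → ℕ}
    (hd : ∀ i ∈ Ioc 0 m, 1 ≤ d i ∧ d i ≤ 9) (he : StrictMonoOn e (Ioc 0 m : Finset ℕ))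
    (heq : 2 ^ n = ∑ i ∈ Ioc 0 m, d i * 10 ^ e i) (hj : j ∈ Ioo 0 m) :
    2 ^ e (j + 1) < 10 ^ (e j + 1) := by
  rw [mem_Ioo] at hj
  have hlow : Ioc 0 j ⊆ Ioc 0 m := Ioc_subset_Ioc_right hj.2.le
  have hhigh : Ioc j m ⊆ Ioc 0 m := Ioc_subset_Ioc_left hj.1.le
  have hjmem : j ∈ Ioc 0 m := mem_Ioc.mpr ⟨hj.1, hj.2.le⟩
  have hkmem : j + 1 ∈ Ioc 0 m := mem_Ioc.mpr ⟨j.succ_pos, hj.2⟩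
  set L := ∑ i ∈ Ioc 0 j, d i * 10 ^ e i
  set H := ∑ i ∈ Ioc j m, d i * 10 ^ e i
  have hsplit : 2 ^ n = L + H := by rw [heq, sum_Ioc_consecutive _ hj.1.le hj.2.le]
  have hL_pos : 0 < L :=
    sum_pos' (fun _ _ => Nat.zero_le _)
      ⟨j, mem_Ioc.mpr ⟨hj.1, le_rfl⟩, Nat.mul_pos (hd j hjmem).1 (by positivity)⟩
  have hL_lt : L < 10 ^ (e j + 1) :=
    Nat.sum_mul_pow_lt_pow_succ (by norm_num) (he.injOn.mono (coe_subset.mpr hlow))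
      (fun i hi => Nat.lt_succ_of_le (hd i (hlow hi)).2)
      (fun i hi => he.monotoneOn (hlow hi) hjmem (mem_Ioc.mp hi).2)
  have hek_le : e (j + 1) ≤ n := by
    have : 10 ^ e (j + 1) ≤ 2 ^ n := heq ▸
      (Nat.le_mul_of_pos_left _ (hd _ hkmem).1).trans
        (single_le_sum (f := fun i => d i * 10 ^ e i) (fun _ _ => Nat.zero_le _) hkmem)
    exact (Nat.pow_le_pow_iff_right (by norm_num)).mp
      ((Nat.pow_le_pow_left (by norm_num) _).trans this)
  have hH_dvd : 2 ^ e (j + 1) ∣ H :=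
    (pow_dvd_pow_of_dvd (by norm_num) _).trans <| pow_dvd_sum_mul_pow fun i hi =>
      he.monotoneOn hkmem (hhigh hi) (mem_Ioc.mp hi).1
  have hL_dvd : 2 ^ e (j + 1) ∣ L :=
    (Nat.dvd_add_left hH_dvd).mp (hsplit ▸ pow_dvd_pow 2 hek_le)
  exact (Nat.le_of_dvd hL_pos hL_dvd).trans_lt hL_lt

theorem stmt7_general (n m : ℕ) (d e : ℕ → ℕ)
    (hd : ∀ i, 1 ≤ i → i ≤ m → 1 ≤ d i ∧ d i ≤ 9)
    (he : ∀ i j, 1 ≤ i → i < j → j ≤ m → e i < e j)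
    (heq : 2 ^ n = ∑ i ∈ Finset.Icc 1 m, d i * 10 ^ (e i)) :
    ∀ k, 2 ≤ k → k ≤ m →
      (e k : ℤ) ≤ ⌊Real.logb 2 10 * ((e (k - 1) : ℝ) + 1)⌋ := by
  intro k hk2 hkm
  obtain ⟨j, rfl⟩ : ∃ j, k = j + 1 := ⟨k - 1, by omega⟩
  have hmono : StrictMonoOn e (Ioc 0 m : Finset ℕ) := fun i hi i' hi' hii' =>
    he i i' (mem_Ioc.mp hi).1 hii' (mem_Ioc.mp hi').2
  have hIcc : Icc 1 m = Ioc 0 m := Icc_add_one_left_eq_Ioc 0 m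
  have hlt : 2 ^ e (j + 1) < 10 ^ (e j + 1) :=
    two_pow_lt_ten_pow_succ_of_eq_sum_digits
      (fun i hi => hd i (mem_Ioc.mp hi).1 (mem_Ioc.mp hi).2) hmono (hIcc ▸ heq)
      (mem_Ioo.mpr ⟨by omega, by omega⟩)
  have hlt_real : (2 : ℝ) ^ e (j + 1) < 10 ^ (e j + 1) := by exact_mod_cast hlt
  simpa only [Nat.add_sub_cancel, Nat.cast_add, Nat.cast_one] using
    Int.le_floor_logb_mul_of_pow_lt one_lt_two (by norm_num) hlt_real

theorem stmt7 (n m : ℕ) (d e : ℕ → ℕ) (hn : 0 < n)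
    (hd : ∀ i, 1 ≤ i → i ≤ m → 1 ≤ d i ∧ d i ≤ 9)
    (he : ∀ i j, 1 ≤ i → i < j → j ≤ m → e i < e j)
    (heq : 2 ^ n = ∑ i ∈ Finset.Icc 1 m, d i * 10 ^ (e i)) :
    ∀ k, 2 ≤ k → k ≤ m →
      (e k : ℤ) ≤ ⌊Real.logb 2 10 * ((e (k - 1) : ℝ) + 1)⌋ :=
  stmt7_general n m d e hd he heq
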